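/- arXiv:2208.00795 — 3 statements merged into one kernel-verified Lean document; each statement's English description precedes it below -/
import Mathlib

section
/- Let G = (V,E) be a finite connected simple graph with edge capacities c : E → ℝ≥0, and let H = (V,D) be a simple graph on the same vertex set with demands d : D → ℝ≥0. For S ⊆ V let δ_G(S) denote the total capacity of the edges of G with exactly one endpoint in S, and let δ_H(S) denote the total demand of the edges of H with exactly one endpoint in S. Call S ⊆ V central if both induced subgraphs G[S] and G[V∖S] are connected (in particular S and V∖S are nonempty). Then δ_G(S) ≥ δ_H(S) holds for every subset S ⊆ V if and only if δ_G(S) ≥ δ_H(S) holds for every central subset S ⊆ V. -/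
open scoped Classical

/-!
Write `f S = δ_G(S) - δ_H(S)`. Then `f Sᶜ = f S`, and whenever `S` splits as `T ⊔ (S \ T)` with no
supply edge between the parts, `f T + f (S \ T) ≤ f S`: capacity is additive over such a split and
demand is subadditive. Splitting off a component of `G[S]` therefore reduces any cut to one with
`G[S]` connected, i.e. (after complementing) to a cut `U` with `G[Uᶜ]` connected. For such `U`, a
component `T` of `G[U]` is central: every other component of `G[U]` is attached to `Uᶜ` because `G`
is connected, so `G[Tᶜ]` is connected. Moreover `U \ T` again has connected complement `Uᶜ ∪ T`,
so induction on `U` finishes.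
-/

namespace SimpleGraph

variable {V : Type*} [DecidableEq V] {G : SimpleGraph V}

lemma exists_adj_notMem_of_separated (hG : G.Preconnected) {T U : Finset V} (hTU : T ⊆ U)
    (hsep : ∀ v ∈ T, ∀ w ∈ U \ T, ¬ G.Adj v w) {x s : V} (hx : x ∈ T) (hs : s ∉ U) :
    ∃ v ∈ T, ∃ w ∉ U, G.Adj v w := by
  obtain ⟨p⟩ := hG x s
  obtain ⟨d, -, hd₁, hd₂⟩ := p.exists_boundary_dart (T : Set V) hx (fun h => hs (hTU h))
  exact ⟨d.fst, hd₁, d.snd, fun hd => hsep _ hd₁ _ (Finset.mem_sdiff.2 ⟨hd, hd₂⟩) d.adj, d.adj⟩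

lemma exists_mem_connected_separated (U : Finset V) {u : V} (hu : u ∈ U) :
    ∃ T ⊆ U, u ∈ T ∧ (G.induce (T : Set V)).Connected ∧
      ∀ v ∈ T, ∀ w ∈ U \ T, ¬ G.Adj v w := by
  -- a maximal connected `T ∋ u` inside `U`: an edge from `T` into `U \ T` would enlarge it
  obtain ⟨T, ⟨hT, hmax⟩⟩ := Finset.exists_maximal (s := U.powerset.filter
    fun T : Finset V => u ∈ T ∧ (G.induce (T : Set V)).Connected)
    ⟨{u}, by simpa [hu] using Connected.of_subsingleton⟩
  simp only [Finset.mem_filter, Finset.mem_powerset] at hT hmax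
  obtain ⟨hTU, huT, hTconn⟩ := hT
  refine ⟨T, hTU, huT, hTconn, fun v hv w hw hvw => (Finset.mem_sdiff.1 hw).2 ?_⟩
  have hconn : (G.induce (insert w T : Finset V)).Connected := by
    rw [Finset.coe_insert, Set.insert_eq]
    exact connected_induce_union Preconnected.of_subsingleton hTconn.preconnected rfl hv hvw.symm
  exact hmax
    ⟨Finset.insert_subset (Finset.mem_sdiff.1 hw).1 hTU, Finset.mem_insert_of_mem huT, hconn⟩
    (Finset.subset_insert w T) (Finset.mem_insert_self w T)

section Fintype

variable [Fintype V]

lemma connected_induce_compl_union (hG : G.Preconnected) {T U : Finset V} (hTU : T ⊆ U)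
    (hUc : (G.induce (↑Uᶜ : Set V)).Connected) (hT : (G.induce (T : Set V)).Connected)
    (hsep : ∀ v ∈ T, ∀ w ∈ U \ T, ¬ G.Adj v w) :
    (G.induce (↑Uᶜ ∪ ↑T : Set V)).Connected := by
  obtain ⟨⟨x, hx⟩⟩ := hT.nonempty
  obtain ⟨⟨s, hs⟩⟩ := hUc.nonempty
  obtain ⟨v, hv, w, hw, hvw⟩ :=
    exists_adj_notMem_of_separated hG hTU hsep hx (by simpa using hs)
  exact connected_induce_union hUc.preconnected hT.preconnected (by simpa using hw) hv hvw.symm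

lemma connected_induce_compl_of_separated (hG : G.Preconnected) {T U : Finset V} (hTU : T ⊆ U)
    (hUc : (G.induce (↑Uᶜ : Set V)).Connected) (hsep : ∀ v ∈ T, ∀ w ∈ U \ T, ¬ G.Adj v w) :
    (G.induce (↑Tᶜ : Set V)).Connected := by
  obtain ⟨⟨s, hs⟩⟩ := hUc.nonempty
  have hUcT : (↑Uᶜ : Set V) ⊆ ↑Tᶜ := by
    simpa using Finset.compl_subset_compl.2 hTU
  refine induce_connected_of_patches s (hUcT hs) fun {v} hv => ?_
  by_cases hvU : v ∈ U
  · obtain ⟨T', hT'T, hvT', hT'conn, hsep'⟩ :=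
      exists_mem_connected_separated (G := G) (U \ T) (Finset.mem_sdiff.2 ⟨hvU, by simpa using hv⟩)
    have hsepU : ∀ x ∈ T', ∀ y ∈ U \ T', ¬ G.Adj x y := by
      intro x hx y hy hxy
      by_cases hyT : y ∈ T
      · exact hsep y hyT x (hT'T hx) hxy.symm
      · exact hsep' x hx y (by simp_all) hxy
    have hconn :=
      connected_induce_compl_union hG (hT'T.trans Finset.sdiff_subset) hUc hT'conn hsepU
    refine ⟨_, Set.union_subset hUcT ?_, Or.inl hs, Or.inr hvT', hconn.preconnected _ _⟩
    intro x hx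
    simpa using (Finset.mem_sdiff.1 (hT'T hx)).2
  · exact ⟨_, hUcT, hs, by simpa using hvU, hUc.preconnected _ _⟩

lemma nonneg_of_connected_induce_compl (hG : G.Preconnected) (f : Finset V → ℝ)
    (hempty : 0 ≤ f ∅)
    (hsplit : ∀ T S, T ⊆ S → (∀ v ∈ T, ∀ w ∈ S \ T, ¬ G.Adj v w) → f T + f (S \ T) ≤ f S)
    (hcentral : ∀ S : Finset V, (G.induce (↑S : Set V)).Connected →
      (G.induce (↑Sᶜ : Set V)).Connected → 0 ≤ f S)
    (U : Finset V) (hU : (G.induce (↑Uᶜ : Set V)).Connected) : 0 ≤ f U := by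
  induction U using Finset.strongInduction with
  | H U ih =>
    obtain rfl | ⟨u, hu⟩ := U.eq_empty_or_nonempty
    · exact hempty
    obtain ⟨T, hTU, huT, hTconn, hsep⟩ := exists_mem_connected_separated (G := G) U hu
    have hT : 0 ≤ f T := hcentral T hTconn (connected_induce_compl_of_separated hG hTU hU hsep)
    have hrest : 0 ≤ f (U \ T) := by
      refine ih _ (Finset.sdiff_ssubset hTU ⟨u, huT⟩) ?_
      have hcompl : (U \ T)ᶜ = Uᶜ ∪ T := by ext; simp [imp_iff_not_or]
      rw [hcompl, Finset.coe_union]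
      exact connected_induce_compl_union hG hTU hU hTconn hsep
    linarith [hsplit T U hTU hsep]

theorem nonneg_of_nonneg_central (hG : G.Preconnected) (f : Finset V → ℝ)
    (hempty : 0 ≤ f ∅)
    (hsplit : ∀ T S, T ⊆ S → (∀ v ∈ T, ∀ w ∈ S \ T, ¬ G.Adj v w) → f T + f (S \ T) ≤ f S)
    (hcentral : ∀ S : Finset V, (G.induce (↑S : Set V)).Connected →
      (G.induce (↑Sᶜ : Set V)).Connected → 0 ≤ f S)
    (hcompl : ∀ S, f Sᶜ = f S) (S : Finset V) : 0 ≤ f S := by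
  induction S using Finset.strongInduction with
  | H S ih =>
    obtain rfl | ⟨u, hu⟩ := S.eq_empty_or_nonempty
    · exact hempty
    obtain ⟨T, hTS, huT, hTconn, hsep⟩ := exists_mem_connected_separated (G := G) S hu
    have hT : 0 ≤ f T := by
      rw [← hcompl]
      exact nonneg_of_connected_induce_compl hG f hempty hsplit hcentral _ (by rwa [compl_compl])
    linarith [hsplit T S hTS hsep, ih _ (Finset.sdiff_ssubset hTS ⟨u, huT⟩)]

end Fintype

end SimpleGraph

section cutWeight

variable {V : Type*} [Fintype V] [DecidableEq V]

def cutWeight (g : V → V → ℝ) (S : Finset V) : ℝ := ∑ v ∈ S, ∑ w ∈ Sᶜ, g v w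

lemma cutWeight_compl {g : V → V → ℝ} (hg : ∀ v w, g v w = g w v) (S : Finset V) :
    cutWeight g Sᶜ = cutWeight g S := by
  rw [cutWeight, cutWeight, compl_compl, Finset.sum_comm]
  simp only [hg]

lemma cutWeight_add_cutWeight_sdiff (g : V → V → ℝ) {T S : Finset V} (hTS : T ⊆ S) :
    cutWeight g T + cutWeight g (S \ T) =
      cutWeight g S + ∑ v ∈ T, ∑ w ∈ S \ T, (g v w + g w v) := by
  have hT : Tᶜ = (S \ T) ∪ Sᶜ := by ext; simp; tauto
  have hST : (S \ T)ᶜ = T ∪ Sᶜ := by ext; simp; tauto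
  have cutT : cutWeight g T = ∑ v ∈ T, ∑ w ∈ S \ T, g v w + ∑ v ∈ T, ∑ w ∈ Sᶜ, g v w := by
    rw [cutWeight, hT, ← Finset.sum_add_distrib]
    exact Finset.sum_congr rfl fun v _ =>
      Finset.sum_union (disjoint_compl_right.mono_left Finset.sdiff_subset)
  have cutST : cutWeight g (S \ T) =
      ∑ v ∈ S \ T, ∑ w ∈ T, g v w + ∑ v ∈ S \ T, ∑ w ∈ Sᶜ, g v w := by
    rw [cutWeight, hST, ← Finset.sum_add_distrib]
    exact Finset.sum_congr rfl fun v _ => Finset.sum_union (disjoint_compl_right.mono_left hTS)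
  have cutS : cutWeight g S = ∑ v ∈ S \ T, ∑ w ∈ Sᶜ, g v w + ∑ v ∈ T, ∑ w ∈ Sᶜ, g v w :=
    (Finset.sum_sdiff hTS).symm
  simp only [cutT, cutST, cutS, Finset.sum_add_distrib]
  rw [Finset.sum_comm (s := T) (f := fun v w => g w v)]
  ring

lemma cutWeight_le_add_cutWeight_sdiff {g : V → V → ℝ} (hg : ∀ v w, 0 ≤ g v w) {T S : Finset V}
    (hTS : T ⊆ S) : cutWeight g S ≤ cutWeight g T + cutWeight g (S \ T) := by
  have hcross : 0 ≤ ∑ v ∈ T, ∑ w ∈ S \ T, (g v w + g w v) :=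
    Finset.sum_nonneg fun v _ => Finset.sum_nonneg fun w _ => add_nonneg (hg v w) (hg w v)
  linarith [cutWeight_add_cutWeight_sdiff g hTS]

end cutWeight

theorem stmt2_general {V : Type*} [Fintype V] [DecidableEq V]
    (G H : SimpleGraph V) [DecidableRel G.Adj] [DecidableRel H.Adj]
    (hG : G.Connected)
    (c d : V → V → ℝ)
    (hcsymm : ∀ u v, c u v = c v u)
    (hdsymm : ∀ u v, d u v = d v u) (hdnn : ∀ u v, 0 ≤ d u v) :
    (∀ S : Finset V,
        ∑ v ∈ S, ∑ w ∈ Sᶜ, (if H.Adj v w then d v w else 0) ≤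
          ∑ v ∈ S, ∑ w ∈ Sᶜ, (if G.Adj v w then c v w else 0)) ↔
    (∀ S : Finset V,
        (G.induce (↑S : Set V)).Connected → (G.induce (↑(Sᶜ) : Set V)).Connected →
        ∑ v ∈ S, ∑ w ∈ Sᶜ, (if H.Adj v w then d v w else 0) ≤
          ∑ v ∈ S, ∑ w ∈ Sᶜ, (if G.Adj v w then c v w else 0)) := by
  set cap : V → V → ℝ := fun v w => if G.Adj v w then c v w else 0
  set dem : V → V → ℝ := fun v w => if H.Adj v w then d v w else 0
  have hcap : ∀ v w, cap v w = cap w v := fun v w => by simp only [cap, G.adj_comm v w, hcsymm]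
  have hdem : ∀ v w, dem v w = dem w v := fun v w => by simp only [dem, H.adj_comm v w, hdsymm]
  have hdem_nonneg : ∀ v w, 0 ≤ dem v w := fun v w => by
    simp only [dem]; split_ifs <;> simp [hdnn]
  have hsplit (T S : Finset V) (hTS : T ⊆ S) (hsep : ∀ v ∈ T, ∀ w ∈ S \ T, ¬ G.Adj v w) :
      (cutWeight cap T - cutWeight dem T) + (cutWeight cap (S \ T) - cutWeight dem (S \ T)) ≤
        cutWeight cap S - cutWeight dem S := by
    have hcap_cross : ∑ v ∈ T, ∑ w ∈ S \ T, (cap v w + cap w v) = 0 :=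
      Finset.sum_eq_zero fun v hv => Finset.sum_eq_zero fun w hw => by
        have hvw := hsep v hv w hw
        have hwv : ¬ G.Adj w v := fun h => hvw h.symm
        simp only [cap, if_neg hvw, if_neg hwv, add_zero]
    linarith [cutWeight_add_cutWeight_sdiff cap hTS, cutWeight_le_add_cutWeight_sdiff hdem_nonneg hTS]
  refine ⟨fun h S _ _ => h S, fun hcentral S => sub_nonneg.1 ?_⟩
  exact SimpleGraph.nonneg_of_nonneg_central hG.preconnected
    (fun S => cutWeight cap S - cutWeight dem S) (by simp [cutWeight]) hsplit
    (fun S h₁ h₂ => sub_nonneg.2 (hcentral S h₁ h₂))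
    (fun S => by simp only [cutWeight_compl hcap, cutWeight_compl hdem]) S

/-- The cut-condition holds for all cuts iff it holds for all central cuts
(`S` is central when both `G[S]` and `G[V ∖ S]` are connected). Here
`∑ v ∈ S, ∑ w ∈ Sᶜ, if G.Adj v w then c v w else 0` is the total capacity `δ_G(S)` of the
supply edges crossing the cut `(S, V ∖ S)`, and similarly for the demands `δ_H(S)`. -/
theorem stmt2 {V : Type*} [Fintype V] [DecidableEq V]
    (G H : SimpleGraph V) [DecidableRel G.Adj] [DecidableRel H.Adj]
    (hG : G.Connected)
    (c d : V → V → ℝ)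
    (hcsymm : ∀ u v, c u v = c v u) (hcnn : ∀ u v, 0 ≤ c u v)
    (hdsymm : ∀ u v, d u v = d v u) (hdnn : ∀ u v, 0 ≤ d u v) :
    (∀ S : Finset V,
        ∑ v ∈ S, ∑ w ∈ Sᶜ, (if H.Adj v w then d v w else 0) ≤
          ∑ v ∈ S, ∑ w ∈ Sᶜ, (if G.Adj v w then c v w else 0)) ↔
    (∀ S : Finset V,
        (G.induce (↑S : Set V)).Connected → (G.induce (↑(Sᶜ) : Set V)).Connected →
        ∑ v ∈ S, ∑ w ∈ Sᶜ, (if H.Adj v w then d v w else 0) ≤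
          ∑ v ∈ S, ∑ w ∈ Sᶜ, (if G.Adj v w then c v w else 0)) :=
  stmt2_general G H hG c d hcsymm hdsymm hdnn
end

section
/- Let G = (V,E) be a finite connected simple graph with edge lengths l : E → ℝ≥0 and shortest-path metric d, let v ∈ V, and let i be an integer. Set P = {x ∈ V : d(v,x) ≤ 2^{i−1}} and Q = {x ∈ V : d(v,x) > 2^{i+3}}. Let l' : E → ℝ≥0 be defined by l'(e) = 0 if both endpoints of e lie in P or both endpoints of e lie in Q, and l'(e) = l(e) otherwise; let d' be the shortest-path pseudometric of G with respect to l'. Then for all s, t ∈ V with d(v,s) = d(v,t) and 2^{i} ≤ d(v,s) ≤ 2^{i+1}, one has d(s,t)/4 ≤ d'(s,t) ≤ d(s,t). -/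
open scoped Classical

/-- Length of a walk with respect to edge lengths `l`. -/
noncomputable def walkLen {V : Type*} {G : SimpleGraph V} (l : Sym2 V → ℝ) {u v : V}
    (p : G.Walk u v) : ℝ :=
  (p.edges.map l).sum

/-- Shortest-path distance in `G` with respect to edge lengths `l`. -/
noncomputable def spDist {V : Type*} (G : SimpleGraph V) (l : Sym2 V → ℝ) (u v : V) : ℝ :=
  sInf {x | ∃ p : G.Walk u v, walkLen l p = x}

/-- `K` is a minor of `G`: disjoint nonempty connected branch sets in `G`, one for each
vertex of `K`, with an edge of `G` between the branch sets of any two adjacent vertices. -/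
def IsMinorOf {W V : Type*} (K : SimpleGraph W) (G : SimpleGraph V) : Prop :=
  ∃ f : W → Set V,
    (∀ w, (f w).Nonempty) ∧
    (∀ w, (G.induce (f w)).Connected) ∧
    (∀ w₁ w₂, w₁ ≠ w₂ → Disjoint (f w₁) (f w₂)) ∧
    (∀ w₁ w₂, K.Adj w₁ w₂ → ∃ u ∈ f w₁, ∃ v ∈ f w₂, G.Adj u v)

/-- The ℓ₁ distance between two points of `ℝ^m`. -/
noncomputable def l1dist {m : ℕ} (x y : Fin m → ℝ) : ℝ := ∑ i, |x i - y i|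

section Aux
variable {V : Type*} {G : SimpleGraph V} {l : Sym2 V → ℝ}

lemma walkLen_nil {u : V} : walkLen l (SimpleGraph.Walk.nil : G.Walk u u) = 0 := by
  simp [walkLen]

lemma walkLen_cons {u x w : V} (h : G.Adj u x) (p : G.Walk x w) :
    walkLen l (SimpleGraph.Walk.cons h p) = l s(u, x) + walkLen l p := by
  simp [walkLen]

lemma walkLen_nonneg (hl : ∀ a b : V, G.Adj a b → 0 ≤ l s(a, b)) {u w : V} (p : G.Walk u w) :
    0 ≤ walkLen l p := by
  induction p with
  | nil => simp [walkLen]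
  | cons h q ih => rw [walkLen_cons]; exact add_nonneg (hl _ _ h) ih

lemma walkLen_append {u x w : V} (p : G.Walk u x) (q : G.Walk x w) :
    walkLen l (p.append q) = walkLen l p + walkLen l q := by
  simp [walkLen]

lemma walkLen_reverse {u w : V} (p : G.Walk u w) : walkLen l p.reverse = walkLen l p := by
  simp [walkLen, List.sum_reverse]

lemma spDist_le (hl : ∀ a b : V, G.Adj a b → 0 ≤ l s(a, b)) {u w : V} (p : G.Walk u w) :
    spDist G l u w ≤ walkLen l p :=
  csInf_le ⟨0, by rintro x ⟨q, rfl⟩; exact walkLen_nonneg hl q⟩ ⟨p, rfl⟩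

lemma le_spDist (hG : G.Connected) {u w : V} {c : ℝ}
    (h : ∀ p : G.Walk u w, c ≤ walkLen l p) : c ≤ spDist G l u w :=
  le_csInf ((hG.preconnected u w).elim fun p => ⟨_, p, rfl⟩) (by rintro x ⟨p, rfl⟩; exact h p)

lemma spDist_nonneg (hG : G.Connected) (hl : ∀ a b : V, G.Adj a b → 0 ≤ l s(a, b)) (u w : V) :
    0 ≤ spDist G l u w :=
  le_spDist hG fun p => walkLen_nonneg hl p

lemma spDist_self (hG : G.Connected) (hl : ∀ a b : V, G.Adj a b → 0 ≤ l s(a, b)) (u : V) :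
    spDist G l u u = 0 :=
  le_antisymm (by simpa [walkLen_nil] using spDist_le hl (SimpleGraph.Walk.nil : G.Walk u u))
    (spDist_nonneg hG hl u u)

lemma spDist_symm (u w : V) : spDist G l u w = spDist G l w u := by
  unfold spDist; congr 1; ext x
  constructor <;> rintro ⟨p, rfl⟩ <;> exact ⟨p.reverse, walkLen_reverse p⟩

lemma spDist_triangle (hG : G.Connected) (hl : ∀ a b : V, G.Adj a b → 0 ≤ l s(a, b))
    (u x w : V) : spDist G l u w ≤ spDist G l u x + spDist G l x w := by
  rw [← sub_le_iff_le_add']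
  apply le_spDist hG
  intro q
  rw [sub_le_iff_le_add, ← sub_le_iff_le_add']
  apply le_spDist hG
  intro p
  have h := spDist_le hl (p.append q)
  rw [walkLen_append] at h
  linarith

lemma spDist_adj (hl : ∀ a b : V, G.Adj a b → 0 ≤ l s(a, b)) {x w : V} (h : G.Adj x w) :
    spDist G l x w ≤ l s(x, w) := by
  have := spDist_le hl (SimpleGraph.Walk.cons h SimpleGraph.Walk.nil)
  simpa [walkLen_cons, walkLen_nil] using this

lemma walkLen_mono {l' : Sym2 V → ℝ} (h : ∀ a b : V, G.Adj a b → l' s(a, b) ≤ l s(a, b))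
    {u w : V} (p : G.Walk u w) : walkLen l' p ≤ walkLen l p := by
  induction p with
  | nil => simp [walkLen]
  | cons hadj q ih =>
    rw [walkLen_cons, walkLen_cons]
    exact add_le_add (h _ _ hadj) ih

end Aux

lemma key_walk {V : Type*} {G : SimpleGraph V} (hG : G.Connected)
    (l l' : Sym2 V → ℝ) (hl : ∀ a b : V, G.Adj a b → 0 ≤ l s(a, b))
    (s t : V) (R : ℝ)
    (hedge : ∀ a b : V, G.Adj a b → l' s(a, b) = l s(a, b) ∨
      (l' s(a, b) = 0 ∧ R ≤ spDist G l s a ∧ R ≤ spDist G l s b ∧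
        R ≤ spDist G l t a ∧ R ≤ spDist G l t b))
    {x : V} (p : G.Walk x t) :
    min (spDist G l x t) (2 * R - min (min (spDist G l s x) (spDist G l t x)) R)
      ≤ walkLen l' p := by
  induction p with
  | nil =>
    rw [walkLen_nil, spDist_self hG hl]
    exact min_le_left _ _
  | cons h q ih =>
    rename_i x y t
    replace ih := ih hedge
    rw [walkLen_cons]
    rcases hedge _ _ h with he | ⟨he, hsa, hsb, hta, htb⟩
    · -- uncontracted edge: l' = l
      have hle : 0 ≤ l s(x, y) := hl _ _ h
      have hxy : spDist G l x y ≤ l s(x, y) := spDist_adj hl h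
      have hA : spDist G l x t ≤ l s(x, y) + spDist G l y t := by
        have := spDist_triangle hG hl x y t; linarith
      have hsy : spDist G l s y ≤ spDist G l s x + l s(x, y) := by
        have h1 := spDist_triangle hG hl s x y; linarith
      have hty : spDist G l t y ≤ spDist G l t x + l s(x, y) := by
        have h1 := spDist_triangle hG hl t x y; linarith
      have hB : min (min (spDist G l s y) (spDist G l t y)) R
          ≤ min (min (spDist G l s x) (spDist G l t x)) R + l s(x, y) := by
        rw [← min_add_add_right, ← min_add_add_right]
        exact min_le_min (min_le_min hsy hty) (by linarith)
      rw [he]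
      rcases le_total (spDist G l y t)
          (2 * R - min (min (spDist G l s y) (spDist G l t y)) R) with hc | hc
      · rw [min_eq_left hc] at ih
        exact le_trans (min_le_left _ _) (by linarith)
      · rw [min_eq_right hc] at ih
        exact le_trans (min_le_right _ _) (by linarith)
    · -- contracted edge
      have hx : min (min (spDist G l s x) (spDist G l t x)) R = R :=
        min_eq_right (le_min hsa hta)
      have hy : min (min (spDist G l s y) (spDist G l t y)) R = R :=
        min_eq_right (le_min hsb htb)
      have hyt : R ≤ spDist G l y t := by rw [spDist_symm]; exact htb
      rw [he, hx, zero_add]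
      rw [hy, min_eq_right (by linarith : 2 * R - R ≤ spDist G l y t)] at ih
      exact le_trans (min_le_right _ _) (by linarith)

/-- Contracting (to length `0`) all edges inside the ball `P` of radius `2^{i−1}` around `v`
and all edges inside the complement `Q` of the ball of radius `2^{i+3}` around `v` distorts
the distance between any pair `s, t` equidistant from `v` at scale `2^i ≤ d(v,s) ≤ 2^{i+1}`
by a factor of at most `4`. -/
theorem stmt6 {V : Type*} [Fintype V] (G : SimpleGraph V) (hG : G.Connected)
    (l : Sym2 V → ℝ) (hl : ∀ e, 0 ≤ l e) (v : V) (i : ℤ)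
    (P Q : Set V)
    (hP : P = {x | spDist G l v x ≤ (2:ℝ) ^ (i - 1)})
    (hQ : Q = {x | (2:ℝ) ^ (i + 3) < spDist G l v x})
    (l' : Sym2 V → ℝ)
    (hl' : ∀ u w : V, G.Adj u w →
      l' s(u, w) = if (u ∈ P ∧ w ∈ P) ∨ (u ∈ Q ∧ w ∈ Q) then 0 else l s(u, w)) :
    ∀ s t : V, spDist G l v s = spDist G l v t →
      (2:ℝ) ^ i ≤ spDist G l v s → spDist G l v s ≤ (2:ℝ) ^ (i + 1) →
      spDist G l s t / 4 ≤ spDist G l' s t ∧ spDist G l' s t ≤ spDist G l s t := by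
  intro s t hst h1 h2
  have hl2 : ∀ a b : V, G.Adj a b → 0 ≤ l s(a, b) := fun a b _ => hl _
  have hl'le : ∀ a b : V, G.Adj a b → l' s(a, b) ≤ l s(a, b) := by
    intro a b h; rw [hl' a b h]; split
    · exact hl _
    · exact le_refl _
  have hl'2 : ∀ a b : V, G.Adj a b → 0 ≤ l' s(a, b) := by
    intro a b h; rw [hl' a b h]; split
    · exact le_refl _
    · exact hl _
  set R : ℝ := (2:ℝ) ^ (i - 1) with hRdef
  have hRpos : 0 < R := by positivity
  have hpow : ∀ k : ℤ, (2:ℝ) ^ (i - 1 + k) = R * 2 ^ k := by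
    intro k; rw [zpow_add₀ (by norm_num : (2:ℝ) ≠ 0)]
  have e1 : (2:ℝ) ^ i = 2 * R := by
    have h := hpow 1
    rw [show i - 1 + 1 = i from by ring] at h
    rw [h]; norm_num [mul_comm]
  have e2 : (2:ℝ) ^ (i + 1) = 4 * R := by
    have h := hpow 2
    rw [show i - 1 + 2 = i + 1 from by ring] at h
    rw [h]; norm_num [mul_comm]
  have e3 : (2:ℝ) ^ (i + 3) = 16 * R := by
    have h := hpow 4
    rw [show i - 1 + 4 = i + 3 from by ring] at h
    rw [h]; norm_num [mul_comm]
  rw [e1] at h1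
  rw [e2] at h2
  have hvt1 : 2 * R ≤ spDist G l v t := hst ▸ h1
  have hvt2 : spDist G l v t ≤ 4 * R := hst ▸ h2
  -- upper bound
  have hupper : spDist G l' s t ≤ spDist G l s t := by
    have hne : Set.Nonempty {x | ∃ p : G.Walk s t, walkLen l p = x} :=
      (hG.preconnected s t).elim fun p => ⟨_, ⟨p, rfl⟩⟩
    refine le_csInf hne ?_
    rintro c ⟨p, rfl⟩
    exact le_trans (spDist_le hl'2 p) (walkLen_mono hl'le p)
  -- lower bound via key_walk
  have hPbound : ∀ x : V, x ∈ P → R ≤ spDist G l s x ∧ R ≤ spDist G l t x := by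
    intro x hx
    rw [hP] at hx
    have hx' : spDist G l v x ≤ R := hx
    have t1 := spDist_triangle hG hl2 v x s
    have t2 := spDist_triangle hG hl2 v x t
    have e4 : spDist G l x s = spDist G l s x := spDist_symm x s
    have e5 : spDist G l x t = spDist G l t x := spDist_symm x t
    constructor <;> linarith
  have hQbound : ∀ x : V, x ∈ Q → R ≤ spDist G l s x ∧ R ≤ spDist G l t x := by
    intro x hx
    rw [hQ] at hx
    have hx' : 16 * R < spDist G l v x := e3 ▸ hx
    have t1 := spDist_triangle hG hl2 v s x
    have t2 := spDist_triangle hG hl2 v t x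
    constructor <;> linarith
  have hedge : ∀ a b : V, G.Adj a b → l' s(a, b) = l s(a, b) ∨
      (l' s(a, b) = 0 ∧ R ≤ spDist G l s a ∧ R ≤ spDist G l s b ∧
        R ≤ spDist G l t a ∧ R ≤ spDist G l t b) := by
    intro a b hab
    rw [hl' a b hab]
    split_ifs with hif
    · right
      rcases hif with ⟨ha, hb⟩ | ⟨ha, hb⟩
      · exact ⟨rfl, (hPbound a ha).1, (hPbound b hb).1, (hPbound a ha).2, (hPbound b hb).2⟩
      · exact ⟨rfl, (hQbound a ha).1, (hQbound b hb).1, (hQbound a ha).2, (hQbound b hb).2⟩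
    · left; rfl
  have hlow : min (spDist G l s t) (2 * R) ≤ spDist G l' s t := by
    apply le_spDist hG
    intro p
    have hk := key_walk hG l l' hl2 s t R hedge p
    rw [spDist_self hG hl2 s] at hk
    have hmin : min (min (0:ℝ) (spDist G l t s)) R = 0 := by
      rw [min_eq_left (spDist_nonneg hG hl2 t s), min_eq_left hRpos.le]
    rw [hmin, sub_zero] at hk
    exact hk
  have hD0 : 0 ≤ spDist G l s t := spDist_nonneg hG hl2 s t
  have hDub : spDist G l s t ≤ 8 * R := by
    have t1 := spDist_triangle hG hl2 s v t
    have e4 : spDist G l s v = spDist G l v s := spDist_symm s v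
    linarith
  refine ⟨le_trans ?_ hlow, hupper⟩
  apply le_min <;> linarith
end

section
/- Let (X,d) be a finite metric space, let Δ > 0 and c > 0, and let μ be a (c,Δ)-Lipschitz distribution over partitions of X. Consider the weighted cut family 𝒞 consisting of, for each partition P in the support of μ and each block B of P, the cut B with weight μ(P)·Δ/(2c). Then δ_𝒞(u,w) ≤ d(u,w) for all u, w ∈ X, and δ_𝒞(s,t) ≥ Δ/c for all s, t ∈ X with d(s,t) > Δ. -/
open scoped Classical

lemma inner_sum_blocks {X : Type*} [Fintype X] (Q : Setoid X) (u w : X) :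
    (∑ S ∈ Finset.univ.image (fun x : X => {y | Q.r y x}),
      |(if u ∈ S then (1:ℝ) else 0) - (if w ∈ S then 1 else 0)|)
    = if Q.r u w then 0 else 2 := by
  by_cases h : Q.r u w
  · simp only [h, if_true]
    apply Finset.sum_eq_zero
    intro S hS
    simp only [Finset.mem_image] at hS
    obtain ⟨x, -, rfl⟩ := hS
    have : u ∈ {y | Q.r y x} ↔ w ∈ {y | Q.r y x} := by
      constructor
      · intro hu; exact Q.trans' (Q.symm' h) hu
      · intro hw; exact Q.trans' h hw
    by_cases hu : u ∈ {y | Q.r y x}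
    · simp [hu, this.mp hu]
    · simp only [hu, if_false]
      have hw : w ∉ {y | Q.r y x} := fun hw => hu (this.mpr hw)
      simp [hw]
  · simp only [h, if_false]
    set Bu : Set X := {y | Q.r y u} with hBu
    set Bw : Set X := {y | Q.r y w} with hBw
    have hne : Bu ≠ Bw := by
      intro he
      have : w ∈ Bw := Q.refl' w
      rw [← he] at this
      exact h (Q.symm' this)
    have hmemu : Bu ∈ Finset.univ.image (fun x : X => {y | Q.r y x}) := by
      exact Finset.mem_image_of_mem _ (Finset.mem_univ u)
    have hmemw : Bw ∈ Finset.univ.image (fun x : X => {y | Q.r y x}) := by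
      exact Finset.mem_image_of_mem _ (Finset.mem_univ w)
    rw [← Finset.sum_subset (Finset.insert_subset hmemu (Finset.singleton_subset_iff.mpr hmemw))]
    · rw [Finset.sum_pair hne]
      have h1 : u ∈ Bu := Q.refl' u
      have h2 : w ∉ Bu := fun hw => h (Q.symm' hw)
      have h3 : w ∈ Bw := Q.refl' w
      have h4 : u ∉ Bw := fun hu => h hu
      simp [h1, h2, h3, h4]
      norm_num
    · intro S hS hS2
      simp only [Finset.mem_image] at hS
      obtain ⟨x, -, rfl⟩ := hS
      simp only [Finset.mem_insert, Finset.mem_singleton] at hS2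
      push_neg at hS2
      have hu : u ∉ {y | Q.r y x} := by
        intro hu
        apply hS2.1
        ext z
        exact ⟨fun hz => Q.trans' hz (Q.symm' hu), fun hz => Q.trans' hz hu⟩
      have hw : w ∉ {y | Q.r y x} := by
        intro hw
        apply hS2.2
        ext z
        exact ⟨fun hz => Q.trans' hz (Q.symm' hw), fun hz => Q.trans' hz hw⟩
      simp [hu, hw]

/-- From a `(c,Δ)`-Lipschitz distribution `μ` over partitions of a finite metric space `X`
(partitions modeled as setoids `P i` with probabilities `p i`; `B i` is the finite set of
blocks of `P i`), the weighted cut family consisting of each block of each partition with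
weight `μ(P)·Δ/(2c)` induces a cut metric `δ` with `δ(u,w) ≤ d(u,w)` for all `u,w` and
`δ(s,t) ≥ Δ/c` whenever `d(s,t) > Δ`. -/
theorem stmt8 {X : Type*} [Fintype X] [MetricSpace X]
    (Δ c : ℝ) (hΔ : 0 < Δ) (hc : 0 < c)
    (n : ℕ) (P : Fin n → Setoid X) (p : Fin n → ℝ)
    (hp : ∀ i, 0 ≤ p i) (hps : ∑ i, p i = 1)
    (hdiam : ∀ i, p i ≠ 0 → ∀ x y : X, (P i).r x y → dist x y ≤ Δ)
    (hsep : ∀ x y : X, (∑ i, if (P i).r x y then (0:ℝ) else p i) ≤ c * dist x y / Δ)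
    (B : Fin n → Finset (Set X))
    (hB : ∀ i, B i = Finset.univ.image (fun x : X => {y | (P i).r y x})) :
    (∀ u w : X,
      (∑ i, ∑ S ∈ B i, (p i * Δ / (2 * c)) *
        |(if u ∈ S then (1:ℝ) else 0) - (if w ∈ S then 1 else 0)|) ≤ dist u w) ∧
    (∀ s t : X, Δ < dist s t →
      Δ / c ≤ ∑ i, ∑ S ∈ B i, (p i * Δ / (2 * c)) *
        |(if s ∈ S then (1:ℝ) else 0) - (if t ∈ S then 1 else 0)|) := by
  have key : ∀ u w : X,
      (∑ i, ∑ S ∈ B i, (p i * Δ / (2 * c)) *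
        |(if u ∈ S then (1:ℝ) else 0) - (if w ∈ S then 1 else 0)|)
      = (Δ / c) * ∑ i, if (P i).r u w then (0:ℝ) else p i := by
    intro u w
    rw [Finset.mul_sum]
    apply Finset.sum_congr rfl
    intro i _
    rw [← Finset.mul_sum, hB i, inner_sum_blocks]
    by_cases h : (P i).r u w
    · simp [h]
    · simp only [h, if_false]
      field_simp
  constructor
  · intro u w
    rw [key u w]
    have h1 : (Δ / c) * (∑ i, if (P i).r u w then (0:ℝ) else p i)
        ≤ (Δ / c) * (c * dist u w / Δ) :=
      mul_le_mul_of_nonneg_left (hsep u w) (by positivity)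
    calc (Δ / c) * (∑ i, if (P i).r u w then (0:ℝ) else p i)
        ≤ (Δ / c) * (c * dist u w / Δ) := h1
      _ = dist u w := by field_simp
  · intro s t hst
    rw [key s t]
    have hsum : (∑ i, if (P i).r s t then (0:ℝ) else p i) = 1 := by
      rw [← hps]
      apply Finset.sum_congr rfl
      intro i _
      by_cases h : (P i).r s t
      · simp only [h, if_true]
        by_contra hne
        have := hdiam i (fun h0 => hne h0.symm) s t h
        linarith
      · simp [h]
    rw [hsum, mul_one]
end
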